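/- arXiv:1310.1215 — 9 statements merged into one kernel-verified Lean document; each statement's English description precedes it below -/
import Mathlib

section
/- Let m ≥ 2 be an integer and let F(x) = x²/2 + x^{2m}/(2m). Then the period function T(A) = 2√2 ∫₀^A dx/√(F(A) − F(x)) of the potential system ẋ = −y, ẏ = x + x^{2m−1} is strictly decreasing on (0, ∞). -/
open Real Set MeasureTheory intervalIntegral

/-!
Substituting `x = A s` gives `T(A) = 2√2 ∫₀¹ ds / √(g(A, s))` with
`g(A, s) = (F(A) − F(A s)) / A² = (1 − s²)/2 + A^(2m−2) (1 − s^(2m)) / (2m)`.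
For each `s ∈ (0, 1)` this is strictly increasing in `A` because `2m − 2 > 0`, so the integrand
strictly decreases. The bound `g(A, s) ≥ (1 − s)/2` dominates every integrand by the integrable
function `√2 (1 − s)^(-1/2)`.
-/

theorem integral_one_div_sqrt_sub_eq_integral_comp_mul (F : ℝ → ℝ) {A : ℝ} (hA : 0 < A) :
    ∫ x in (0:ℝ)..A, 1 / √(F A - F x) =
      ∫ s in (0:ℝ)..1, 1 / √((F A - F (A * s)) / A ^ 2) := by
  have hsubst := smul_integral_comp_mul_left (a := 0) (b := 1) (fun x => 1 / √(F A - F x)) A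
  rw [mul_zero, mul_one] at hsubst
  rw [← hsubst, smul_eq_mul, ← intervalIntegral.integral_const_mul]
  refine integral_congr fun s _ => ?_
  simp only [sqrt_div' _ (sq_nonneg A), sqrt_sq hA.le, one_div_div, mul_one_div]

theorem intervalIntegrable_one_div_sqrt_of_mul_one_sub_le {g : ℝ → ℝ} {c : ℝ} (hc : 0 < c)
    (hg : Measurable g) (hle : ∀ s ∈ Ioo (0:ℝ) 1, c * (1 - s) ≤ g s) :
    IntervalIntegrable (fun s => 1 / √(g s)) volume 0 1 := by
  have hmajorant : IntervalIntegrable (fun s : ℝ => (√c)⁻¹ * (1 - s) ^ (-(1 / 2) : ℝ))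
      volume 0 1 := by
    have hrpow : IntervalIntegrable (fun x : ℝ => x ^ (-(1 / 2) : ℝ)) volume 0 1 :=
      intervalIntegrable_rpow' (by norm_num)
    simpa using (hrpow.comp_sub_left 1).symm.const_mul (√c)⁻¹
  rw [intervalIntegrable_iff_integrableOn_Ioo_of_le zero_le_one] at hmajorant ⊢
  refine hmajorant.mono' (hg.sqrt.const_div 1).aestronglyMeasurable ?_
  filter_upwards [ae_restrict_mem measurableSet_Ioo] with s hs
  have hs1 : 0 < 1 - s := by linarith [hs.2]
  rw [norm_of_nonneg (by positivity), rpow_neg hs1.le, ← sqrt_eq_rpow, ← mul_inv, ← one_div,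
    ← sqrt_mul hc.le]
  exact one_div_le_one_div_of_le (sqrt_pos.2 (by positivity)) (sqrt_le_sqrt (hle s hs))

theorem integral_one_div_sqrt_lt_of_lt {g₁ g₂ : ℝ → ℝ} {a b : ℝ} (hab : a < b)
    (h₁ : IntervalIntegrable (fun s => 1 / √(g₁ s)) volume a b)
    (h₂ : IntervalIntegrable (fun s => 1 / √(g₂ s)) volume a b)
    (hpos : ∀ s ∈ Ioo a b, 0 < g₁ s) (hlt : ∀ s ∈ Ioo a b, g₁ s < g₂ s) :
    ∫ s in a..b, 1 / √(g₂ s) < ∫ s in a..b, 1 / √(g₁ s) := by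
  rw [← sub_pos, ← integral_sub h₁ h₂]
  refine intervalIntegral_pos_of_pos_on (h₁.sub h₂) (fun s hs => sub_pos.2 ?_) hab
  exact one_div_lt_one_div_of_lt (sqrt_pos.2 (hpos s hs)) (sqrt_lt_sqrt (hpos s hs).le (hlt s hs))

noncomputable def potential (m : ℕ) (x : ℝ) : ℝ := x ^ 2 / 2 + x ^ (2 * m) / (2 * m)

noncomputable def normalizedEnergyGap (m : ℕ) (A s : ℝ) : ℝ :=
  (1 - s ^ 2) / 2 + A ^ (2 * m - 2) * (1 - s ^ (2 * m)) / (2 * m)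

theorem potential_sub_potential_mul_div_sq {m : ℕ} (hm : 1 ≤ m) {A : ℝ} (hA : A ≠ 0)
    (s : ℝ) :
    (potential m A - potential m (A * s)) / A ^ 2 = normalizedEnergyGap m A s := by
  have hpow : A ^ (2 * m) = A ^ (2 * m - 2) * A ^ 2 := by rw [← pow_add]; congr 1; omega
  unfold potential normalizedEnergyGap
  rw [mul_pow, mul_pow, hpow]
  field_simp
  ring

theorem measurable_normalizedEnergyGap (m : ℕ) (A : ℝ) :
    Measurable (normalizedEnergyGap m A) := by
  unfold normalizedEnergyGap
  fun_prop

theorem half_mul_one_sub_le_normalizedEnergyGap (m : ℕ) {A s : ℝ} (hA : 0 ≤ A)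
    (hs : s ∈ Ioo 0 1) :
    1 / 2 * (1 - s) ≤ normalizedEnergyGap m A s := by
  have hsq : s ^ 2 ≤ s := by nlinarith [hs.1, hs.2]
  have hpow : s ^ (2 * m) ≤ 1 := pow_le_one₀ hs.1.le hs.2.le
  have htail : 0 ≤ A ^ (2 * m - 2) * (1 - s ^ (2 * m)) / (2 * m) := by
    apply div_nonneg (mul_nonneg (pow_nonneg hA _) (by linarith)) (by positivity)
  unfold normalizedEnergyGap
  linarith

theorem normalizedEnergyGap_pos (m : ℕ) {A s : ℝ} (hA : 0 ≤ A) (hs : s ∈ Ioo 0 1) :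
    0 < normalizedEnergyGap m A s :=
  (mul_pos one_half_pos (sub_pos.2 hs.2)).trans_le
    (half_mul_one_sub_le_normalizedEnergyGap m hA hs)

theorem normalizedEnergyGap_strictMonoOn {m : ℕ} (hm : 2 ≤ m) {s : ℝ} (hs : s ∈ Ioo 0 1) :
    StrictMonoOn (fun A => normalizedEnergyGap m A s) (Ici 0) := by
  intro A₁ hA₁ A₂ _ hlt
  have hpow : A₁ ^ (2 * m - 2) < A₂ ^ (2 * m - 2) := pow_lt_pow_left₀ hlt hA₁ (by omega)
  have hcoeff : 0 < (1 - s ^ (2 * m)) / (2 * m) :=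
    div_pos (by linarith [pow_lt_one₀ hs.1.le hs.2 (by omega : 2 * m ≠ 0)]) (by positivity)
  simp only [normalizedEnergyGap, mul_div_assoc]
  linarith [mul_lt_mul_of_pos_right hpow hcoeff]

/-- For `m ≥ 2` and the potential `F(x) = x²/2 + x^(2m)/(2m)`, the period function
`T(A) = 2√2 ∫₀^A dx/√(F(A) − F(x))` of `ẋ = −y, ẏ = x + x^(2m−1)` is strictly
decreasing on `(0, ∞)`. -/
theorem period_function_strictAnti (m : ℕ) (hm : 2 ≤ m)
    (F T : ℝ → ℝ)
    (hF : ∀ x : ℝ, F x = x ^ 2 / 2 + x ^ (2 * m) / (2 * m))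
    (hT : ∀ A : ℝ, T A = 2 * Real.sqrt 2 * ∫ x in (0:ℝ)..A, 1 / Real.sqrt (F A - F x)) :
    StrictAntiOn T (Set.Ioi (0 : ℝ)) := by
  obtain rfl : F = potential m := funext hF
  have hperiod : ∀ A ∈ Ioi (0:ℝ),
      T A = 2 * √2 * ∫ s in (0:ℝ)..1, 1 / √(normalizedEnergyGap m A s) := fun A hA => by
    simp only [hT, integral_one_div_sqrt_sub_eq_integral_comp_mul _ hA,
      potential_sub_potential_mul_div_sq (by omega : 1 ≤ m) (ne_of_gt hA)]
  have hintegrable : ∀ A ∈ Ioi (0:ℝ),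
      IntervalIntegrable (fun s => 1 / √(normalizedEnergyGap m A s)) volume 0 1 :=
    fun A hA => intervalIntegrable_one_div_sqrt_of_mul_one_sub_le one_half_pos
      (measurable_normalizedEnergyGap m A)
      fun s hs => half_mul_one_sub_le_normalizedEnergyGap m (le_of_lt hA) hs
  intro A₁ hA₁ A₂ hA₂ hlt
  rw [hperiod A₁ hA₁, hperiod A₂ hA₂]
  refine mul_lt_mul_of_pos_left ?_ (by positivity)
  exact integral_one_div_sqrt_lt_of_lt zero_lt_one (hintegrable A₁ hA₁) (hintegrable A₂ hA₂)
    (fun s hs => normalizedEnergyGap_pos m (le_of_lt hA₁) hs)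
    fun s hs => normalizedEnergyGap_strictMonoOn hm hs (mem_Ici.2 (le_of_lt hA₁))
      (mem_Ici.2 (le_of_lt hA₂)) hlt
end

section
/- Let m ≥ 2 be an integer, let F(x) = x²/2 + x^{2m}/(2m), and let T(A) = 2√2 ∫₀^A dx/√(F(A) − F(x)). Then lim_{A → ∞} A^{m−1} T(A) = 2 B(1/(2m), 1/2)/√m, where B denotes the Euler Beta function. -/
/-!
Substituting `x = A s` gives `A^(m-1) T(A) = 4 √m ∫₀¹ (1 - s^(2m) + ε (1 - s²))^(-1/2) ds` with
`ε = m / A^(2m-2) → 0`. For `ε ≥ 0` the integrand is dominated by its value at `ε = 0`, which is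
integrable because `1 - s^(2m) ≥ 1 - s`, so dominated convergence applies; the substitution
`u = s^(2m)` turns the limit integral into `B(1/(2m), 1/2) / (2m)`.
-/

open Real Set Filter MeasureTheory Topology ProbabilityTheory Interval

theorem ProbabilityTheory.beta_eq_intervalIntegral {α β : ℝ} (hα : 0 < α) (hβ : 0 < β) :
    beta α β = ∫ x in (0 : ℝ)..1, x ^ (α - 1) * (1 - x) ^ (β - 1) := by
  have h : Complex.betaIntegral α β =
      ((∫ x in (0 : ℝ)..1, x ^ (α - 1) * (1 - x) ^ (β - 1) : ℝ) : ℂ) := by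
    rw [Complex.betaIntegral, ← intervalIntegral.integral_ofReal]
    refine intervalIntegral.integral_congr fun x hx => ?_
    rw [uIcc_of_le zero_le_one] at hx
    simp [Complex.ofReal_cpow hx.1, Complex.ofReal_cpow (sub_nonneg.2 hx.2)]
  rw [beta_eq_betaIntegralReal α β hα hβ, h, Complex.ofReal_re]

theorem integral_comp_rpow_Ioo_zero_one {E : Type*} [NormedAddCommGroup E] [NormedSpace ℝ E]
    (g : ℝ → E) {p : ℝ} (hp : 0 < p) :
    ∫ x in Ioo 0 1, (p * x ^ (p - 1)) • g (x ^ p) = ∫ y in Ioo 0 1, g y := by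
  have himage : (fun x : ℝ => x ^ p) '' Ioo 0 1 = Ioo 0 1 := by
    ext y
    constructor
    · rintro ⟨x, ⟨hx0, hx1⟩, rfl⟩
      exact ⟨rpow_pos_of_pos hx0 p, rpow_lt_one hx0.le hx1 hp⟩
    · rintro ⟨hy0, hy1⟩
      refine ⟨y ^ p⁻¹, ⟨rpow_pos_of_pos hy0 _, rpow_lt_one hy0.le hy1 (inv_pos.2 hp)⟩, ?_⟩
      simp [← rpow_mul hy0.le, hp.ne']
  have hsubst := integral_image_eq_integral_abs_deriv_smul measurableSet_Ioo
    (fun x hx => (hasDerivAt_rpow_const (Or.inl hx.1.ne')).hasDerivWithinAt)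
    ((rpow_left_injOn hp.ne').mono fun x (hx : x ∈ Ioo (0 : ℝ) 1) => hx.1.le) g
  rw [himage] at hsubst
  rw [hsubst]
  refine setIntegral_congr_fun measurableSet_Ioo fun x hx => ?_
  rw [abs_of_nonneg (by have := hx.1; positivity)]

theorem integral_one_sub_rpow_rpow_eq_beta {p q : ℝ} (hp : 0 < p) (hq : 0 < q) :
    ∫ x in (0 : ℝ)..1, (1 - x ^ p) ^ (q - 1) = beta p⁻¹ q / p := by
  rw [beta_eq_intervalIntegral (inv_pos.2 hp) hq, eq_div_iff hp.ne', mul_comm,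
    ← intervalIntegral.integral_const_mul]
  simp only [intervalIntegral.integral_of_le zero_le_one, integral_Ioc_eq_integral_Ioo]
  rw [← integral_comp_rpow_Ioo_zero_one (fun y => y ^ (p⁻¹ - 1) * (1 - y) ^ (q - 1)) hp]
  refine setIntegral_congr_fun measurableSet_Ioo fun x hx => ?_
  have hcancel : x ^ (p - 1) * (x ^ p) ^ (p⁻¹ - 1) = 1 := by
    rw [← rpow_mul hx.1.le, ← rpow_add hx.1, mul_sub, mul_inv_cancel₀ hp.ne']
    simp
  rw [smul_eq_mul]
  linear_combination (-p * (1 - x ^ p) ^ (q - 1)) * hcancel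

theorem one_div_sqrt_eq_rpow {x : ℝ} (hx : 0 ≤ x) : 1 / √x = x ^ (-(1 / 2) : ℝ) := by
  rw [rpow_neg hx, ← sqrt_eq_rpow, one_div]

theorem integral_one_div_sqrt_one_sub_pow {n : ℕ} (hn : n ≠ 0) :
    ∫ s in (0 : ℝ)..1, 1 / √(1 - s ^ n) = beta (1 / n) (1 / 2) / n := by
  have hn' : (0 : ℝ) < n := by positivity
  rw [one_div (n : ℝ), ← integral_one_sub_rpow_rpow_eq_beta hn' one_half_pos]
  refine intervalIntegral.integral_congr fun s hs => ?_
  rw [uIcc_of_le zero_le_one] at hs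
  rw [rpow_natCast, one_div_sqrt_eq_rpow (sub_nonneg.2 (pow_le_one₀ hs.1 hs.2))]
  norm_num

theorem one_div_sqrt_one_sub_pow_le {n : ℕ} (hn : n ≠ 0) {s : ℝ} (hs0 : 0 ≤ s) (hs1 : s ≤ 1) :
    1 / √(1 - s ^ n) ≤ 1 / √(1 - s) := by
  rcases hs1.eq_or_lt with rfl | hs1
  · simp
  exact one_div_le_one_div_of_le (sqrt_pos.2 (sub_pos.2 hs1))
    (sqrt_le_sqrt (sub_le_sub_left (pow_le_of_le_one hs0 hs1.le hn) 1))

theorem intervalIntegrable_one_div_sqrt_one_sub_pow {n : ℕ} (hn : n ≠ 0) :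
    IntervalIntegrable (fun s : ℝ => 1 / √(1 - s ^ n)) volume 0 1 := by
  have hbound : IntervalIntegrable (fun s : ℝ => (1 - s) ^ (-(1 / 2) : ℝ)) volume 0 1 := by
    simpa using ((intervalIntegral.intervalIntegrable_rpow' (a := 0) (b := 1)
      (by norm_num : (-1 : ℝ) < -(1 / 2))).comp_sub_left 1).symm
  refine hbound.mono_fun' (Measurable.aestronglyMeasurable (by fun_prop)) ?_
  filter_upwards [ae_restrict_mem measurableSet_uIoc] with s hs
  rw [uIoc_of_le zero_le_one] at hs
  rw [norm_of_nonneg (by positivity), ← one_div_sqrt_eq_rpow (sub_nonneg.2 hs.2)]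
  exact one_div_sqrt_one_sub_pow_le hn hs.1.le hs.2

theorem tendsto_integral_one_div_sqrt_add_mul {f g : ℝ → ℝ} {a b : ℝ} (hf : Measurable f)
    (hg : Measurable g) (hf0 : ∀ᵐ x, x ∈ Ι a b → 0 ≤ f x) (hg0 : ∀ᵐ x, x ∈ Ι a b → 0 < g x)
    (hint : IntervalIntegrable (fun x => 1 / √(g x)) volume a b) :
    Tendsto (fun ε => ∫ x in a..b, 1 / √(g x + ε * f x)) (𝓝[≥] 0)
      (𝓝 (∫ x in a..b, 1 / √(g x))) := by
  refine intervalIntegral.tendsto_integral_filter_of_dominated_convergence _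
    (.of_forall fun ε => Measurable.aestronglyMeasurable (by fun_prop)) ?_ hint ?_
  · filter_upwards [self_mem_nhdsWithin] with ε (hε : 0 ≤ ε)
    filter_upwards [hf0, hg0] with x hfx hgx hx
    rw [norm_of_nonneg (by positivity)]
    exact one_div_le_one_div_of_le (sqrt_pos.2 (hgx hx))
      (sqrt_le_sqrt (le_add_of_nonneg_right (mul_nonneg hε (hfx hx))))
  · filter_upwards [hg0] with x hgx hx
    have hlin : Tendsto (fun ε => g x + ε * f x) (𝓝[≥] 0) (𝓝 (g x)) := by
      have hcont : Continuous fun ε => g x + ε * f x := by fun_prop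
      simpa using (hcont.tendsto 0).mono_left nhdsWithin_le_nhds
    exact tendsto_const_nhds.div hlin.sqrt (sqrt_ne_zero'.2 (hgx hx))

theorem tendsto_integral_one_div_sqrt_one_sub_pow_add_mul {n : ℕ} (hn : n ≠ 0) :
    Tendsto (fun ε => ∫ s in (0 : ℝ)..1, 1 / √(1 - s ^ n + ε * (1 - s ^ 2))) (𝓝[≥] 0)
      (𝓝 (beta (1 / n) (1 / 2) / n)) := by
  rw [← integral_one_div_sqrt_one_sub_pow hn]
  refine tendsto_integral_one_div_sqrt_add_mul (by fun_prop) (by fun_prop) ?_ ?_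
    (intervalIntegrable_one_div_sqrt_one_sub_pow hn)
  · refine .of_forall fun s hs => ?_
    rw [uIoc_of_le zero_le_one] at hs
    exact sub_nonneg.2 (pow_le_one₀ hs.1.le hs.2)
  · filter_upwards [Measure.ae_ne volume 1] with s hs1 hs
    rw [uIoc_of_le zero_le_one] at hs
    exact sub_pos.2 (pow_lt_one₀ hs.1.le (hs.2.lt_of_ne hs1) hn)

noncomputable def evenPotential (m : ℕ) (x : ℝ) : ℝ := x ^ 2 / 2 + x ^ (2 * m) / (2 * m)

theorem evenPotential_sub_evenPotential_mul {m : ℕ} (hm : m ≠ 0) {A : ℝ} (hA : A ≠ 0) (s : ℝ) :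
    evenPotential m A - evenPotential m (A * s) =
      A ^ (2 * m) / (2 * m) * (1 - s ^ (2 * m) + m / A ^ (2 * m - 2) * (1 - s ^ 2)) := by
  have hpow : A ^ (2 * m) = A ^ (2 * m - 2) * A ^ 2 := by rw [← pow_add]; congr 1; omega
  simp only [evenPotential, mul_pow, hpow]
  field_simp
  ring

theorem pow_mul_integral_one_div_sqrt_evenPotential {m : ℕ} (hm : m ≠ 0) {A : ℝ} (hA : 0 < A) :
    A ^ (m - 1) * ∫ x in (0 : ℝ)..A, 1 / √(evenPotential m A - evenPotential m x) =
      √(2 * m) * ∫ s in (0 : ℝ)..1, 1 / √(1 - s ^ (2 * m) + m / A ^ (2 * m - 2) * (1 - s ^ 2)) := by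
  have hpow : A ^ (m - 1) * A = A ^ m := by rw [← pow_succ]; congr 1; omega
  have hscale := intervalIntegral.smul_integral_comp_mul_left
    (fun x => 1 / √(evenPotential m A - evenPotential m x)) A (a := 0) (b := 1)
  rw [mul_zero, mul_one] at hscale
  rw [← hscale, smul_eq_mul, ← mul_assoc, hpow, ← intervalIntegral.integral_const_mul,
    ← intervalIntegral.integral_const_mul]
  congr 1 with s
  rw [evenPotential_sub_evenPotential_mul hm hA.ne', sqrt_mul (by positivity),
    sqrt_div' _ (by positivity), pow_mul', sqrt_sq (by positivity), one_div, one_div, mul_inv,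
    inv_div, ← mul_assoc, mul_div_cancel₀ _ (by positivity)]

/-- Behavior at infinity of the period function of `ẋ = −y, ẏ = x + x^(2m−1)`:
`lim_{A→∞} A^(m−1) T(A) = 2 B(1/(2m), 1/2) / √m`, where `B` is the Euler Beta function. -/
theorem period_function_at_infinity (m : ℕ) (hm : 2 ≤ m)
    (F T : ℝ → ℝ)
    (hF : ∀ x : ℝ, F x = x ^ 2 / 2 + x ^ (2 * m) / (2 * m))
    (hT : ∀ A : ℝ, T A = 2 * Real.sqrt 2 * ∫ x in (0:ℝ)..A, 1 / Real.sqrt (F A - F x))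
    (B : ℝ → ℝ → ℝ)
    (hB : ∀ p q : ℝ, B p q = Real.Gamma p * Real.Gamma q / Real.Gamma (p + q)) :
    Tendsto (fun A : ℝ => A ^ (m - 1) * T A) atTop
      (nhds (2 * B (1 / (2 * (m : ℝ))) (1 / 2) / Real.sqrt (m : ℝ))) := by
  obtain rfl : F = evenPotential m := funext hF
  obtain rfl : B = beta := funext₂ hB
  have hε : Tendsto (fun A : ℝ => (m : ℝ) / A ^ (2 * m - 2)) atTop (𝓝[≥] 0) :=
    tendsto_nhdsWithin_iff.2 ⟨tendsto_const_nhds.div_atTop (tendsto_pow_atTop (by omega)),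
      (eventually_gt_atTop 0).mono fun A hA => mem_Ici.2 (by positivity)⟩
  have hlim := (tendsto_integral_one_div_sqrt_one_sub_pow_add_mul (n := 2 * m) (by omega)).comp hε
  have hconst : 2 * √2 * √(2 * m) * (beta (1 / (2 * m : ℕ)) (1 / 2) / (2 * m : ℕ)) =
      2 * beta (1 / (2 * (m : ℝ))) (1 / 2) / √m := by
    have hsqrt : √2 * √(2 * m) = 2 * √m := by
      rw [← sqrt_mul zero_le_two, show (2 : ℝ) * (2 * m) = 2 ^ 2 * m by ring,
        sqrt_mul (by positivity), sqrt_sq zero_le_two]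
    rw [mul_assoc 2, hsqrt, Nat.cast_mul, Nat.cast_ofNat]
    field_simp
    rw [sq_sqrt (Nat.cast_nonneg m), mul_comm]
  rw [← hconst]
  refine (hlim.const_mul _).congr' ?_
  filter_upwards [eventually_gt_atTop 0] with A hA
  rw [hT, mul_left_comm, pow_mul_integral_one_div_sqrt_evenPotential (by omega) hA, mul_assoc]
  rfl
end

section
/- Let m ≥ 2 be an integer and define T₁(A) = 2^m π / √( ((2m−1)!/((m−1)!·m!)) A^{2m−2} + 2^{2m−2} ) for A ≥ 0. Then: (a) T₁ is strictly decreasing on (0, ∞); (b) as A → 0⁺, T₁(A) = 2π(1 − c A^{2m−2} + (3/2) c² A^{4m−4}) + O(A^{6m−6}), where c = (2m−1)!!/(2m)!!; (c) lim_{A → ∞} A^{m−1} T₁(A) = 2^m π / √((2m−1)!/((m−1)!·m!)). -/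
/-!
The identity `(2m−1)!/((m−1)!·m!) = 2·4^(m−1)·c`, with `c = (2m−1)!!/(2m)!!`, turns the
harmonic balance period into `T₁(A) = 2π/√(1 + 2c·A^(2m−2))`. Monotonicity and the limit at
infinity are then immediate, and the expansion at `0` is the second-order Taylor polynomial of
`(1 + u)^(−1/2)`, whose remainder is at most `u³` for `0 ≤ u ≤ 1`.
-/

open Real Set Filter Topology
open scoped Nat

theorem cast_factorial_div_eq_doubleFactorial_div {m : ℕ} (hm : 1 ≤ m) :
    ((2 * m - 1)! : ℝ) / ((m - 1)! * m !)
      = 2 * (((2 * m - 1)‼ : ℝ) / (2 * m)‼) * 4 ^ (m - 1) := by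
  obtain ⟨k, rfl⟩ : ∃ k, m = k + 1 := ⟨m - 1, by omega⟩
  have hodd : 2 * (k + 1) - 1 = 2 * k + 1 := by omega
  simp only [hodd, Nat.add_sub_cancel, Nat.factorial_eq_mul_doubleFactorial,
    Nat.doubleFactorial_two_mul]
  push_cast
  rw [show (4 : ℝ) = 2 ^ 2 by norm_num, ← pow_mul]
  field_simp
  ring

theorem two_pow_mul_div_sqrt_eq {m : ℕ} (hm : 1 ≤ m) (P c x : ℝ) :
    2 ^ m * P / √(2 * c * 4 ^ (m - 1) * x + 2 ^ (2 * m - 2)) = 2 * P / √(1 + 2 * c * x) := by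
  have hpow : (2 : ℝ) ^ (2 * m - 2) = (2 ^ (m - 1)) ^ 2 := by
    rw [← pow_mul]; congr 1; omega
  have hfour : (4 : ℝ) ^ (m - 1) = (2 ^ (m - 1)) ^ 2 := by
    rw [← pow_mul, show (4 : ℝ) = 2 ^ 2 by norm_num, ← pow_mul, mul_comm]
  have hm' : (2 : ℝ) ^ m = 2 ^ (m - 1) * 2 := by rw [← pow_succ]; congr 1; omega
  rw [hpow, hfour, show 2 * c * (2 ^ (m - 1)) ^ 2 * x + (2 ^ (m - 1)) ^ 2
      = (2 ^ (m - 1)) ^ 2 * (1 + 2 * c * x) by ring,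
    Real.sqrt_mul (by positivity), Real.sqrt_sq (by positivity), hm', mul_assoc,
    mul_div_mul_left _ _ (by positivity)]

theorem abs_inv_sqrt_one_add_sub_le {u : ℝ} (hu0 : 0 ≤ u) (hu1 : u ≤ 1) :
    |(√(1 + u))⁻¹ - (1 - u / 2 + 3 / 8 * u ^ 2)| ≤ u ^ 3 := by
  obtain ⟨s, hs⟩ : ∃ s, √(1 + u) = s := ⟨_, rfl⟩
  obtain ⟨p, hp⟩ : ∃ p, 1 - u / 2 + 3 / 8 * u ^ 2 = p := ⟨_, rfl⟩
  rw [hs, hp]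
  have hs2 : s ^ 2 = 1 + u := hs ▸ Real.sq_sqrt (by linarith)
  have hs1 : 1 ≤ s := hs ▸ Real.one_le_sqrt.mpr (by linarith)
  have hp0 : 0 < p := by nlinarith
  -- `(p s)² − 1 = u³ (40 − 15u + 9u²)/64 ∈ [0, u³]`, so `1 ≤ p s` and
  -- `p s − 1 ≤ ((p s)² − 1)/2 ≤ u³ ≤ u³ s`.
  have hsq : (p * s) ^ 2 = 1 + u ^ 3 * (40 - 15 * u + 9 * u ^ 2) / 64 := by
    rw [mul_pow, hs2, ← hp]; ring
  have hcube : 0 ≤ u ^ 3 * (40 - 15 * u + 9 * u ^ 2) := mul_nonneg (by positivity) (by nlinarith)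
  have hlow : 1 ≤ p * s := by nlinarith [mul_pos hp0 (by linarith : (0 : ℝ) < s)]
  have hup : p * s - 1 ≤ u ^ 3 * s := by
    nlinarith [mul_nonneg (pow_nonneg hu0 3) hu0, mul_nonneg (pow_nonneg hu0 4) hu0,
      mul_nonneg (pow_nonneg hu0 3) (sub_nonneg.2 hs1)]
  have hs0 : 0 < s := by linarith
  have hdiff : p - s⁻¹ = (p * s - 1) / s := by field_simp
  rw [abs_sub_comm, hdiff, abs_of_nonneg (by positivity), div_le_iff₀ hs0]
  exact hup

theorem strictAntiOn_div_sqrt_mul_pow_add {P K B : ℝ} {n : ℕ} (hP : 0 < P) (hK : 0 < K)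
    (hB : 0 ≤ B) (hn : n ≠ 0) :
    StrictAntiOn (fun A : ℝ => P / √(K * A ^ n + B)) (Ioi 0) := by
  intro a (ha : 0 < a) b (hb : 0 < b) hab
  have hpos : 0 < K * a ^ n + B := by positivity
  refine div_lt_div_of_pos_left hP (Real.sqrt_pos.2 hpos) (Real.sqrt_lt_sqrt hpos.le ?_)
  gcongr

theorem tendsto_pow_mul_div_sqrt_mul_pow_two_mul_add (P B : ℝ) {K : ℝ} (hK : 0 < K) {k : ℕ}
    (hk : k ≠ 0) :
    Tendsto (fun A : ℝ => A ^ k * (P / √(K * A ^ (2 * k) + B))) atTop (𝓝 (P / √K)) := by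
  have hlim : Tendsto (fun A : ℝ => K + B * (A ^ (2 * k))⁻¹) atTop (𝓝 K) := by
    simpa using tendsto_const_nhds.add
      ((tendsto_inv_atTop_zero.comp (tendsto_pow_atTop (by omega))).const_mul B)
  refine Tendsto.congr' ?_
    (tendsto_const_nhds.div (Real.continuous_sqrt.tendsto K |>.comp hlim) (by positivity))
  filter_upwards [eventually_gt_atTop 0] with A hA
  have hsplit : K * A ^ (2 * k) + B = (A ^ k) ^ 2 * (K + B * (A ^ (2 * k))⁻¹) := by
    rw [← pow_mul, mul_comm k]; field_simp
  simp only [Pi.div_apply, Function.comp, hsplit,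
    Real.sqrt_mul (by positivity : (0 : ℝ) ≤ (A ^ k) ^ 2),
    Real.sqrt_sq (by positivity : (0 : ℝ) ≤ A ^ k)]
  rw [mul_div_assoc', mul_div_mul_left _ _ (by positivity)]

theorem abs_two_mul_div_sqrt_one_add_sub_le {P c x : ℝ} (hP : 0 ≤ P) (hc : 0 ≤ c) (hx : 0 ≤ x)
    (h : 2 * c * x ≤ 1) :
    |2 * P / √(1 + 2 * c * x) - 2 * P * (1 - c * x + 3 / 2 * c ^ 2 * x ^ 2)|
      ≤ 16 * P * c ^ 3 * x ^ 3 := by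
  calc |2 * P / √(1 + 2 * c * x) - 2 * P * (1 - c * x + 3 / 2 * c ^ 2 * x ^ 2)|
      = |2 * P * ((√(1 + 2 * c * x))⁻¹ - (1 - 2 * c * x / 2 + 3 / 8 * (2 * c * x) ^ 2))| := by
        ring_nf
    _ = 2 * P * |(√(1 + 2 * c * x))⁻¹ - (1 - 2 * c * x / 2 + 3 / 8 * (2 * c * x) ^ 2)| := by
        rw [abs_mul, abs_of_nonneg (by positivity)]
    _ ≤ 2 * P * (2 * c * x) ^ 3 :=
        mul_le_mul_of_nonneg_left (abs_inv_sqrt_one_add_sub_le (by positivity) h) (by positivity)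
    _ = 16 * P * c ^ 3 * x ^ 3 := by ring

theorem exists_abs_two_mul_div_sqrt_one_add_pow_sub_le {P c : ℝ} (hP : 0 < P) (hc : 0 < c)
    {n : ℕ} (hn : n ≠ 0) :
    ∃ C > (0 : ℝ), ∃ δ > (0 : ℝ), ∀ A : ℝ, 0 < A → A < δ →
      |2 * P / √(1 + 2 * c * A ^ n) - 2 * P * (1 - c * A ^ n + 3 / 2 * c ^ 2 * A ^ (2 * n))|
        ≤ C * A ^ (3 * n) := by
  refine ⟨16 * P * c ^ 3, by positivity, min 1 (1 / (2 * c)), by positivity, fun A hA hAδ => ?_⟩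
  have hsmall : 2 * c * A ^ n ≤ 1 := by
    have hA1 : A ^ n ≤ A := pow_le_of_le_one hA.le ((hAδ.trans_le (min_le_left _ _)).le) hn
    have hAc : A * (2 * c) < 1 := (lt_div_iff₀ (by positivity)).1 (hAδ.trans_le (min_le_right _ _))
    nlinarith
  simpa only [pow_mul'] using
    abs_two_mul_div_sqrt_one_add_sub_le hP.le hc.le (by positivity) hsmall

/-- Properties of the first-order harmonic balance approximation
`T₁(A) = 2^m π / √(((2m−1)!/((m−1)!·m!)) A^(2m−2) + 2^(2m−2))` of the period function
of `ẋ = −y, ẏ = x + x^(2m−1)`: it is strictly decreasing on `(0,∞)`, its Taylor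
expansion at `0` is `2π(1 − c A^(2m−2) + (3/2)c² A^(4m−4)) + O(A^(6m−6))` with
`c = (2m−1)!!/(2m)!!`, and `lim_{A→∞} A^(m−1) T₁(A) = 2^m π/√((2m−1)!/((m−1)!·m!))`. -/
theorem first_order_HBM_period (m : ℕ) (hm : 2 ≤ m)
    (T₁ : ℝ → ℝ)
    (hT₁ : ∀ A : ℝ, T₁ A = 2 ^ m * π / Real.sqrt
        ((Nat.factorial (2 * m - 1) : ℝ) / ((Nat.factorial (m - 1) : ℝ) * (Nat.factorial m : ℝ))
            * A ^ (2 * m - 2) + 2 ^ (2 * m - 2)))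
    (c : ℝ)
    (hc : c = (Nat.doubleFactorial (2 * m - 1) : ℝ) / (Nat.doubleFactorial (2 * m) : ℝ)) :
    StrictAntiOn T₁ (Set.Ioi (0 : ℝ))
    ∧ (∃ C > (0 : ℝ), ∃ δ > (0 : ℝ), ∀ A : ℝ, 0 < A → A < δ →
        |T₁ A - 2 * π * (1 - c * A ^ (2 * m - 2) + (3 / 2) * c ^ 2 * A ^ (4 * m - 4))|
          ≤ C * A ^ (6 * m - 6))
    ∧ Tendsto (fun A : ℝ => A ^ (m - 1) * T₁ A) atTop
        (nhds (2 ^ m * π / Real.sqrt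
          ((Nat.factorial (2 * m - 1) : ℝ)
            / ((Nat.factorial (m - 1) : ℝ) * (Nat.factorial m : ℝ))))) := by
  have hc0 : 0 < c :=
    hc ▸ div_pos (mod_cast Nat.doubleFactorial_pos _) (mod_cast Nat.doubleFactorial_pos _)
  have hK : ((2 * m - 1)! : ℝ) / ((m - 1)! * m !) = 2 * c * 4 ^ (m - 1) := by
    rw [cast_factorial_div_eq_doubleFactorial_div (by omega), hc]
  have hK0 : 0 < ((2 * m - 1)! : ℝ) / ((m - 1)! * m !) := hK ▸ by positivity
  have hT₁' : ∀ A, T₁ A = 2 * π / √(1 + 2 * c * A ^ (2 * m - 2)) := fun A => by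
    rw [hT₁, hK, two_pow_mul_div_sqrt_eq (by omega)]
  refine ⟨?_, ?_, ?_⟩
  · rw [funext hT₁]
    exact strictAntiOn_div_sqrt_mul_pow_add (by positivity) hK0 (by positivity) (by omega)
  · simp_rw [hT₁', show 4 * m - 4 = 2 * (2 * m - 2) by omega,
      show 6 * m - 6 = 3 * (2 * m - 2) by omega]
    exact exists_abs_two_mul_div_sqrt_one_add_pow_sub_le pi_pos hc0 (by omega)
  · simp_rw [hT₁, show 2 * m - 2 = 2 * (m - 1) by omega]
    exact tendsto_pow_mul_div_sqrt_mul_pow_two_mul_add _ _ hK0 (by omega)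
end

section
/- For every real x, x² + (x² − 1)·ln(x² + 1) ≥ 0, with equality only at x = 0. -/
open Real

theorem add_sub_one_mul_log_add_one_pos {t : ℝ} (ht : 0 < t) :
    0 < t + (t - 1) * log (t + 1) := by
  rcases le_or_gt t 1 with hle | hgt
  · have hlog_le : log (t + 1) ≤ t := by
      linarith [log_le_sub_one_of_pos (show 0 < t + 1 by linarith)]
    calc 0 < t ^ 2 := by positivity
      _ = t + (t - 1) * t := by ring
      _ ≤ t + (t - 1) * log (t + 1) := by
        gcongr t + ?_
        exact mul_le_mul_of_nonpos_left hlog_le (by linarith)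
  · have : 0 ≤ (t - 1) * log (t + 1) := 
      mul_nonneg (by linarith) (log_nonneg (by linarith))
    linarith

/-- For every real `x`, `x² + (x² − 1)·ln(x² + 1) ≥ 0`, with equality only at `x = 0`. -/
theorem log_inequality :
    ∀ x : ℝ, 0 ≤ x ^ 2 + (x ^ 2 - 1) * Real.log (x ^ 2 + 1)
      ∧ (x ^ 2 + (x ^ 2 - 1) * Real.log (x ^ 2 + 1) = 0 ↔ x = 0) := by
  intro x
  rcases eq_or_ne x 0 with rfl | hx
  · simp
  · have hpos := add_sub_one_mul_log_add_one_pos (by positivity : 0 < x ^ 2)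
    exact ⟨hpos.le, iff_of_false hpos.ne' hx⟩
end

section
/- For every real m > 1 and every real w ≥ 1, (2m−1)·w^m − 2m·w^{m−1} − m·w + m + 1 ≥ 0, with equality at w = 1. -/
open Real

/-! Writing `f` for the left-hand side, `f 1 = 0` and
`f' w = m ((2m-1) w^(m-1) - 2(m-1) w^(m-2) - 1)`. For `w ≥ 1` and `m ≥ 1` we have
`w^(m-2) ≤ w^(m-1)`, so the bracket is at least `w^(m-1) - 1 ≥ 0`; hence `f` is
nondecreasing on `[1, ∞)` and stays above `f 1 = 0`. -/

noncomputable def periodNumerator (m w : ℝ) : ℝ :=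
  (2 * m - 1) * w ^ m - 2 * m * w ^ (m - 1) - m * w + m + 1

lemma periodNumerator_one (m : ℝ) : periodNumerator m 1 = 0 := by
  simp [periodNumerator]

noncomputable def periodNumeratorDeriv (m w : ℝ) : ℝ :=
  m * ((2 * m - 1) * w ^ (m - 1) - 2 * (m - 1) * w ^ (m - 2) - 1)

lemma hasDerivAt_periodNumerator (m : ℝ) {w : ℝ} (hw : 0 < w) :
    HasDerivAt (periodNumerator m) (periodNumeratorDeriv m w) w := by
  have hpow (p : ℝ) : HasDerivAt (fun x : ℝ => x ^ p) (p * w ^ (p - 1)) w :=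
    hasDerivAt_rpow_const (Or.inl hw.ne')
  have h := ((((hpow m).const_mul (2 * m - 1)).sub ((hpow (m - 1)).const_mul (2 * m))).sub
    ((hasDerivAt_id' w).const_mul m)).add_const (m + 1)
  have hfun : periodNumerator m =
      fun x => (2 * m - 1) * x ^ m - 2 * m * x ^ (m - 1) - m * x + (m + 1) := by
    ext x
    rw [periodNumerator, add_assoc]
  rw [hfun, periodNumeratorDeriv, show m - 2 = m - 1 - 1 by ring]
  exact h.congr_deriv (by ring)

lemma periodNumeratorDeriv_nonneg {m w : ℝ} (hm : 1 ≤ m) (hw : 1 ≤ w) :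
    0 ≤ periodNumeratorDeriv m w := by
  have hle : w ^ (m - 2) ≤ w ^ (m - 1) := rpow_le_rpow_of_exponent_le hw (by linarith)
  have hone : 1 ≤ w ^ (m - 1) := one_le_rpow hw (by linarith)
  refine mul_nonneg (by linarith) ?_
  nlinarith

lemma monotoneOn_periodNumerator {m : ℝ} (hm : 1 ≤ m) :
    MonotoneOn (periodNumerator m) (Set.Ici 1) := by
  have hderiv {w : ℝ} (hw : 1 ≤ w) := hasDerivAt_periodNumerator m (one_pos.trans_le hw)
  refine monotoneOn_of_hasDerivWithinAt_nonneg (f' := periodNumeratorDeriv m) (convex_Ici 1)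
    (fun w hw => (hderiv hw).continuousAt.continuousWithinAt) ?_ ?_ <;>
    simp only [interior_Ici, Set.mem_Ioi]
  · exact fun w hw => (hderiv hw.le).hasDerivWithinAt
  · exact fun w hw => periodNumeratorDeriv_nonneg hm hw.le

/-- For every real `m > 1` and `w ≥ 1`:
`(2m−1)·w^m − 2m·w^(m−1) − m·w + m + 1 ≥ 0`, with equality at `w = 1`. -/
theorem rpow_numerator_nonneg (m : ℝ) (hm : 1 < m) :
    (∀ w : ℝ, 1 ≤ w →
      0 ≤ (2 * m - 1) * w ^ m - 2 * m * w ^ (m - 1) - m * w + m + 1)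
    ∧ (2 * m - 1) * (1 : ℝ) ^ m - 2 * m * (1 : ℝ) ^ (m - 1) - m * 1 + m + 1 = 0 := by
  refine ⟨fun w hw => ?_, periodNumerator_one m⟩
  calc 0 = periodNumerator m 1 := (periodNumerator_one m).symm
    _ ≤ periodNumerator m w :=
      monotoneOn_periodNumerator hm.le Set.self_mem_Ici hw hw
end

section
/- For every integer m ≥ 1 and all real numbers A and k, (1/π) ∫₀^{2π} (A² cos²θ + k²)^m cos²θ dθ = Σ_{j=0}^{m} 4^{−j} C(m, j) C(2j+1, j) k^{2(m−j)} A^{2j}, where C(n, r) is the binomial coefficient. -/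
/-!
Expanding `(A² cos²θ + k²)^m` binomially reduces the integral to the even moments
`∫₀^{2π} cos^{2n} = 2π C(2n, n) / 4ⁿ`, which follow from the reduction formula for
`∫ cos^n` because the boundary terms vanish over a full period. The coefficient `C(2j+1, j)`
then comes from `C(2j+2, j+1) = 2 C(2j+1, j)`.
-/

open Real Finset

theorem Nat.centralBinom_succ_eq_two_mul_choose (n : ℕ) :
    Nat.centralBinom (n + 1) = 2 * Nat.choose (2 * n + 1) n := by
  rw [Nat.centralBinom, show 2 * (n + 1) = 2 * n + 1 + 1 by ring, Nat.choose_succ_succ',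
    Nat.choose_symm_half, ← two_mul]

theorem integral_cos_pow_add_two_zero_two_pi (n : ℕ) :
    ∫ θ in (0 : ℝ)..2 * π, cos θ ^ (n + 2) =
      (n + 1) / (n + 2) * ∫ θ in (0 : ℝ)..2 * π, cos θ ^ n := by
  simp [integral_cos_pow]

theorem integral_cos_pow_two_mul_zero_two_pi (n : ℕ) :
    ∫ θ in (0 : ℝ)..2 * π, cos θ ^ (2 * n) = 2 * π * Nat.centralBinom n / 4 ^ n := by
  induction n with
  | zero => simp
  | succ n ih =>
    have hrec : ((n + 1 : ℕ) : ℝ) * Nat.centralBinom (n + 1) =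
        2 * (2 * n + 1) * Nat.centralBinom n := by
      exact_mod_cast Nat.succ_mul_centralBinom_succ n
    rw [mul_add_one, integral_cos_pow_add_two_zero_two_pi, ih]
    field_simp
    push_cast at hrec ⊢
    linear_combination (-2 * 4 ^ n) * hrec

theorem add_pow_mul_eq_sum {R : Type*} [CommSemiring R] (a b c : R) (m : ℕ) :
    (a * c + b) ^ m * c =
      ∑ j ∈ range (m + 1), (m.choose j : R) * b ^ (m - j) * a ^ j * c ^ (j + 1) := by
  rw [add_pow, sum_mul]
  refine sum_congr rfl fun j _ => ?_
  ring

theorem first_harmonic_coefficient_general (m : ℕ) (A k : ℝ) :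
    (1 / π) * ∫ θ in (0:ℝ)..(2 * π),
        (A ^ 2 * Real.cos θ ^ 2 + k ^ 2) ^ m * Real.cos θ ^ 2
      = ∑ j ∈ Finset.range (m + 1),
          ((1 : ℝ) / 4) ^ j * (Nat.choose m j : ℝ) * (Nat.choose (2 * j + 1) j : ℝ)
            * k ^ (2 * (m - j)) * A ^ (2 * j) := by
  simp_rw [add_pow_mul_eq_sum, ← pow_mul]
  rw [intervalIntegral.integral_finsetSum fun j _ =>
    Continuous.intervalIntegrable (by fun_prop) _ _, mul_sum]
  refine sum_congr rfl fun j _ => ?_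
  rw [intervalIntegral.integral_const_mul, integral_cos_pow_two_mul_zero_two_pi,
    Nat.centralBinom_succ_eq_two_mul_choose, one_div_pow]
  field_simp
  push_cast
  ring

/-- First-harmonic Fourier coefficient identity:
`(1/π) ∫₀^{2π} (A² cos²θ + k²)^m cos²θ dθ
  = Σ_{j=0}^m 4^(−j) C(m,j) C(2j+1,j) k^(2(m−j)) A^(2j)`. -/
theorem first_harmonic_coefficient (m : ℕ) (hm : 1 ≤ m) (A k : ℝ) :
    (1 / π) * ∫ θ in (0:ℝ)..(2 * π),
        (A ^ 2 * Real.cos θ ^ 2 + k ^ 2) ^ m * Real.cos θ ^ 2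
      = ∑ j ∈ Finset.range (m + 1),
          ((1 : ℝ) / 4) ^ j * (Nat.choose m j : ℝ) * (Nat.choose (2 * j + 1) j : ℝ)
            * k ^ (2 * (m - j)) * A ^ (2 * j) :=
  first_harmonic_coefficient_general m A k
end

section
/- Let T(A) = 4 ∫₀^A dx/√(2h − x² − x⁴/2) with h = A²/2 + A⁴/4 be the period function of the Duffing-harmonic oscillator ẋ = −y, ẏ = x + x³. Then, as A → 0⁺, T(A) = 2π − (3/4)πA² + (57/128)πA⁴ − (315/1024)πA⁶ + (30345/131072)πA⁸ + O(A^{10}); that is, there exist C, δ > 0 such that the difference between T(A) and this polynomial is at most C A^{10} for 0 < A < δ. -/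
/-!
Substituting `x = A sin θ` factors the energy gap as
`2h - x² - x⁴/2 = (A cos θ)² (1 + u θ)` with `u θ = A² (1 + sin² θ) / 2 ≤ A²`, so the quarter
period becomes `∫₀^{π/2} (1 + u θ)^{-1/2} dθ`, with no singularity left. Replacing `(1 + u)^{-1/2}`
by its Taylor polynomial of degree 4 costs at most `u⁵ ≤ A¹⁰` pointwise, and the polynomial in
`sin² θ` is integrated exactly by Wallis' formulas.
-/

open Real Set intervalIntegral

noncomputable def taylorInvSqrtOneAdd (u : ℝ) : ℝ :=
  1 - u / 2 + 3 * u ^ 2 / 8 - 5 * u ^ 3 / 16 + 35 * u ^ 4 / 128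

lemma taylorInvSqrtOneAdd_sq_sub_one_sub_inv {v : ℝ} (hv : v ≠ 0) :
    taylorInvSqrtOneAdd (v ^ 2 - 1) - v⁻¹ =
      (v - 1) ^ 5 * (128 + 325 * v + 345 * v ^ 2 + 175 * v ^ 3 + 35 * v ^ 4) / (128 * v) := by
  unfold taylorInvSqrtOneAdd
  field_simp
  ring

lemma abs_one_div_sqrt_one_add_sub_taylor_le {u : ℝ} (hu : 0 ≤ u) :
    |1 / √(1 + u) - taylorInvSqrtOneAdd u| ≤ u ^ 5 := by
  obtain ⟨v, hv, rfl⟩ : ∃ v, 1 ≤ v ∧ u = v ^ 2 - 1 :=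
    ⟨√(1 + u), by simpa using hu, by rw [sq_sqrt (by linarith)]; ring⟩
  have hv1 : 0 ≤ (v - 1) ^ 5 := pow_nonneg (by linarith) 5
  have hr : 128 + 325 * v + 345 * v ^ 2 + 175 * v ^ 3 + 35 * v ^ 4 ≤ 128 * v * (v + 1) ^ 5 := by
    nlinarith [pow_le_pow_left₀ zero_le_one hv 2, pow_le_pow_left₀ zero_le_one hv 3,
      pow_le_pow_left₀ zero_le_one hv 4, pow_le_pow_left₀ zero_le_one hv 5,
      pow_le_pow_left₀ zero_le_one hv 6]
  rw [show 1 + (v ^ 2 - 1) = v ^ 2 by ring, sqrt_sq (by linarith), one_div, abs_sub_comm,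
    taylorInvSqrtOneAdd_sq_sub_one_sub_inv (by positivity), abs_of_nonneg (by positivity),
    div_le_iff₀ (by positivity)]
  calc (v - 1) ^ 5 * (128 + 325 * v + 345 * v ^ 2 + 175 * v ^ 3 + 35 * v ^ 4)
      ≤ (v - 1) ^ 5 * (128 * v * (v + 1) ^ 5) := by gcongr
    _ = (v ^ 2 - 1) ^ 5 * (128 * v) := by ring

lemma abs_integral_one_div_sqrt_one_add_sub_integral_taylor_le {u : ℝ → ℝ} (hu : Continuous u)
    {B : ℝ} (hu₀ : ∀ θ, 0 ≤ u θ) (huB : ∀ θ, u θ ≤ B) (a b : ℝ) :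
    |(∫ θ in a..b, 1 / √(1 + u θ)) - ∫ θ in a..b, taylorInvSqrtOneAdd (u θ)| ≤
      B ^ 5 * |b - a| := by
  have hcont : Continuous fun θ => 1 / √(1 + u θ) :=
    continuous_const.div (by fun_prop) fun θ => (sqrt_pos.2 (by linarith [hu₀ θ])).ne'
  have hpointwise (θ : ℝ) : ‖1 / √(1 + u θ) - taylorInvSqrtOneAdd (u θ)‖ ≤ B ^ 5 :=
    calc |1 / √(1 + u θ) - taylorInvSqrtOneAdd (u θ)| ≤ u θ ^ 5 :=
          abs_one_div_sqrt_one_add_sub_taylor_le (hu₀ θ)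
      _ ≤ B ^ 5 := pow_le_pow_left₀ (hu₀ θ) (huB θ) 5
  rw [← integral_sub (hcont.intervalIntegrable _ _)
    (Continuous.intervalIntegrable (by unfold taylorInvSqrtOneAdd; fun_prop) _ _), ← norm_eq_abs]
  exact norm_integral_le_of_norm_le_const fun θ _ => hpointwise θ

lemma integral_sin_pow_add_two_zero_pi_div_two (n : ℕ) :
    ∫ x in 0..π / 2, sin x ^ (n + 2) = (n + 1) / (n + 2) * ∫ x in 0..π / 2, sin x ^ n := by
  simp [integral_sin_pow]

lemma integral_even_poly_sin (a₀ a₁ a₂ a₃ a₄ : ℝ) :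
    ∫ θ in 0..π / 2, (a₀ + a₁ * sin θ ^ 2 + a₂ * sin θ ^ 4 + a₃ * sin θ ^ 6 + a₄ * sin θ ^ 8) =
      π / 2 * (a₀ + a₁ / 2 + 3 * a₂ / 8 + 5 * a₃ / 16 + 35 * a₄ / 128) := by
  rw [integral_add, integral_add, integral_add, integral_add]
  · simp only [integral_const, integral_const_mul, integral_sin_pow_add_two_zero_pi_div_two]
    norm_num
    ring
  all_goals exact Continuous.intervalIntegrable (by fun_prop) _ _

/-- No integrability of `f` is needed: the formula for injective changes of variables holds
unconditionally, which matters because the Duffing integrand is singular at `x = A`. -/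
lemma integral_comp_mul_sin {E : Type*} [NormedAddCommGroup E] [NormedSpace ℝ E]
    {A : ℝ} (hA : 0 < A) (f : ℝ → E) :
    ∫ x in 0..A, f x = ∫ θ in 0..π / 2, (A * cos θ) • f (A * sin θ) := by
  have hmono : StrictMonoOn (fun θ => A * sin θ) (Icc 0 (π / 2)) := fun x hx y hy hxy =>
    mul_lt_mul_of_pos_left (strictMonoOn_sin ⟨by linarith [pi_pos, hx.1], hx.2⟩
      ⟨by linarith [pi_pos, hy.1], hy.2⟩ hxy) hA
  have himage : (fun θ => A * sin θ) '' Icc 0 (π / 2) = Icc 0 A := by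
    rw [ContinuousOn.image_Icc_of_monotoneOn pi_div_two_pos.le (by fun_prop) hmono.monotoneOn]
    simp
  have hderiv : ∀ θ ∈ Icc (0 : ℝ) (π / 2),
      HasDerivWithinAt (fun θ => A * sin θ) (A * cos θ) (Icc 0 (π / 2)) θ :=
    fun θ _ => ((hasDerivAt_sin θ).const_mul A).hasDerivWithinAt
  rw [integral_of_le hA.le, integral_of_le pi_div_two_pos.le,
    ← MeasureTheory.integral_Icc_eq_integral_Ioc, ← MeasureTheory.integral_Icc_eq_integral_Ioc,
    ← himage,
    MeasureTheory.integral_image_eq_integral_abs_deriv_smul measurableSet_Icc hderiv hmono.injOn]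
  refine MeasureTheory.setIntegral_congr_fun measurableSet_Icc fun θ hθ => ?_
  rw [abs_of_nonneg (mul_nonneg hA.le (cos_nonneg_of_mem_Icc ⟨by linarith [pi_pos, hθ.1], hθ.2⟩))]

lemma duffing_energy_gap_comp_sin (A θ : ℝ) :
    2 * (A ^ 2 / 2 + A ^ 4 / 4) - (A * sin θ) ^ 2 - (A * sin θ) ^ 4 / 2 =
      (A * cos θ) ^ 2 * (1 + A ^ 2 * (1 + sin θ ^ 2) / 2) := by
  linear_combination (-(A ^ 2) * (1 + A ^ 2 * (1 + sin θ ^ 2) / 2)) * cos_sq' θ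

lemma duffing_quarter_period_eq {A : ℝ} (hA : 0 < A) :
    ∫ x in 0..A, 1 / √(2 * (A ^ 2 / 2 + A ^ 4 / 4) - x ^ 2 - x ^ 4 / 2) =
      ∫ θ in 0..π / 2, 1 / √(1 + A ^ 2 * (1 + sin θ ^ 2) / 2) := by
  rw [integral_comp_mul_sin hA]
  refine integral_congr_uIoo fun θ hθ => ?_
  rw [uIoo_of_le pi_div_two_pos.le] at hθ
  have hcos : 0 < cos θ := cos_pos_of_mem_Ioo ⟨by linarith [hθ.1, pi_pos], hθ.2⟩
  have hc : 0 < A * cos θ := mul_pos hA hcos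
  simp only [smul_eq_mul, duffing_energy_gap_comp_sin, sqrt_mul (sq_nonneg _), sqrt_sq hc.le]
  field_simp

lemma integral_taylorInvSqrtOneAdd_duffing (A : ℝ) :
    ∫ θ in 0..π / 2, taylorInvSqrtOneAdd (A ^ 2 * (1 + sin θ ^ 2) / 2) =
      (2 * π - (3 / 4) * π * A ^ 2 + (57 / 128) * π * A ^ 4
          - (315 / 1024) * π * A ^ 6 + (30345 / 131072) * π * A ^ 8) / 4 := by
  have hexpand (θ : ℝ) : taylorInvSqrtOneAdd (A ^ 2 * (1 + sin θ ^ 2) / 2) =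
      (1 - A ^ 2 / 4 + 3 * A ^ 4 / 32 - 5 * A ^ 6 / 128 + 35 * A ^ 8 / 2048)
        + (-A ^ 2 / 4 + 3 * A ^ 4 / 16 - 15 * A ^ 6 / 128 + 35 * A ^ 8 / 512) * sin θ ^ 2
        + (3 * A ^ 4 / 32 - 15 * A ^ 6 / 128 + 105 * A ^ 8 / 1024) * sin θ ^ 4
        + (-5 * A ^ 6 / 128 + 35 * A ^ 8 / 512) * sin θ ^ 6
        + (35 * A ^ 8 / 2048) * sin θ ^ 8 := by
    unfold taylorInvSqrtOneAdd; ring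
  simp_rw [hexpand, integral_even_poly_sin]
  ring

/-- Taylor expansion at `A = 0` of the period function of the Duffing-harmonic
oscillator `ẋ = −y, ẏ = x + x³`:
`T(A) = 2π − (3/4)πA² + (57/128)πA⁴ − (315/1024)πA⁶ + (30345/131072)πA⁸ + O(A¹⁰)`. -/
theorem duffing_period_taylor (T : ℝ → ℝ)
    (hT : ∀ A : ℝ, T A = 4 * ∫ x in (0:ℝ)..A,
        1 / Real.sqrt (2 * (A ^ 2 / 2 + A ^ 4 / 4) - x ^ 2 - x ^ 4 / 2)) :
    ∃ C > (0 : ℝ), ∃ δ > (0 : ℝ), ∀ A : ℝ, 0 < A → A < δ →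
      |T A - (2 * π - (3 / 4) * π * A ^ 2 + (57 / 128) * π * A ^ 4
          - (315 / 1024) * π * A ^ 6 + (30345 / 131072) * π * A ^ 8)| ≤ C * A ^ 10 := by
  refine ⟨2 * π, by positivity, 1, one_pos, fun A hA _ => ?_⟩
  have herr := abs_integral_one_div_sqrt_one_add_sub_integral_taylor_le
    (u := fun θ => A ^ 2 * (1 + sin θ ^ 2) / 2) (B := A ^ 2) (by fun_prop)
    (fun θ => by positivity) (fun θ => by nlinarith [sin_sq_le_one θ]) 0 (π / 2)
  rw [integral_taylorInvSqrtOneAdd_duffing, sub_zero, abs_of_pos pi_div_two_pos] at herr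
  rw [hT, duffing_quarter_period_eq hA]
  set I := ∫ θ in 0..π / 2, 1 / √(1 + A ^ 2 * (1 + sin θ ^ 2) / 2)
  set P := 2 * π - (3 / 4) * π * A ^ 2 + (57 / 128) * π * A ^ 4
    - (315 / 1024) * π * A ^ 6 + (30345 / 131072) * π * A ^ 8
  rw [show 4 * I - P = 4 * (I - P / 4) by ring, abs_mul, abs_of_pos four_pos]
  calc 4 * |I - P / 4| ≤ 4 * ((A ^ 2) ^ 5 * (π / 2)) := by gcongr
    _ = 2 * π * A ^ 10 := by ring
end

section
/- For each A ≥ 0 the polynomial p_A(ω) = 1058 ω⁶ − 3(219A² + 322) ω⁴ − (9/4)(21A⁴ + 80A² + 40) ω² − (27/64) A² (7A² + 8)² − 2 has exactly one positive real root ω₂(A). Moreover, the function T₂(A) = 2π/ω₂(A) satisfies, as A → 0⁺, T₂(A) = 2π − (3/4)πA² + (57/128)πA⁴ − (633/2048)πA⁶ + O(A⁸). -/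
/-!
In the variables `ε = A²` and `σ = ω⁻²` the sextic factors as `p_A(ω) = ω⁶ q_ε(σ)`, where
`q_ε(σ) = 1058 - β σ - γ σ² - δ σ³` with `β ≥ 966` and `γ, δ ≥ 0` for `ε ≥ 0`. On `σ ≥ 0`
the cubic `q_ε` is therefore decreasing with slope at least `966` in absolute value. This gives
the uniqueness of the positive root, and it converts the residual `q_ε(Σ(ε)) = O(ε⁴)` of the
truncated series `Σ` of `σ = ω₂⁻²` into `|ω₂⁻² - Σ(ε)| = O(ε⁴)`. Taking square roots,
`ω₂⁻¹ = T₂ / (2π)` agrees with its truncated series to `O(ε⁴) = O(A⁸)`.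
-/

open Real

theorem mul_abs_sub_le_abs_cubic_sub {k b c d σ σ' : ℝ} (hb : 0 ≤ b) (hc : 0 ≤ c) (hd : 0 ≤ d)
    (hσ : 0 ≤ σ) (hσ' : 0 ≤ σ') :
    b * |σ - σ'| ≤
      |(k - b * σ - c * σ ^ 2 - d * σ ^ 3) - (k - b * σ' - c * σ' ^ 2 - d * σ' ^ 3)| := by
  have hslope : b ≤ b + c * (σ + σ') + d * (σ ^ 2 + σ * σ' + σ' ^ 2) := by
    have := mul_nonneg hc (add_nonneg hσ hσ')
    have := mul_nonneg hd (add_nonneg (add_nonneg (sq_nonneg σ) (mul_nonneg hσ hσ')) (sq_nonneg σ'))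
    linarith
  have hfactor : (k - b * σ - c * σ ^ 2 - d * σ ^ 3) - (k - b * σ' - c * σ' ^ 2 - d * σ' ^ 3) =
      -((σ - σ') * (b + c * (σ + σ') + d * (σ ^ 2 + σ * σ' + σ' ^ 2))) := by ring
  rw [hfactor, abs_neg, abs_mul, abs_of_nonneg (hb.trans hslope), mul_comm b]
  exact mul_le_mul_of_nonneg_left hslope (abs_nonneg _)

theorem abs_sub_le_two_mul_abs_sq_sub {x y : ℝ} (hx : 0 ≤ x) (hy : 1 / 2 ≤ y) :
    |x - y| ≤ 2 * |x ^ 2 - y ^ 2| := by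
  rw [sq_sub_sq, abs_mul, abs_of_pos (by linarith : 0 < x + y)]
  nlinarith [abs_nonneg (x - y)]

/-- The cubic `q_ε(σ)` with `p_A(ω) = ω⁶ q_{A²}(ω⁻²)`, see `duffing_sextic_eq`. -/
noncomputable def duffingCubic (ε σ : ℝ) : ℝ :=
  1058 - (966 + 657 * ε) * σ - (90 + 180 * ε + 189 / 4 * ε ^ 2) * σ ^ 2
    - (2 + 27 * ε + 189 / 4 * ε ^ 2 + 1323 / 64 * ε ^ 3) * σ ^ 3

theorem duffing_sextic_eq (A : ℝ) {ω : ℝ} (hω : ω ≠ 0) :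
    1058 * ω ^ 6 - 3 * (219 * A ^ 2 + 322) * ω ^ 4
        - (9 / 4) * (21 * A ^ 4 + 80 * A ^ 2 + 40) * ω ^ 2
        - (27 / 64) * A ^ 2 * (7 * A ^ 2 + 8) ^ 2 - 2 =
      ω ^ 6 * duffingCubic (A ^ 2) (ω ^ 2)⁻¹ := by
  unfold duffingCubic
  field_simp
  ring

section

variable {ε : ℝ}

theorem mul_abs_sub_le_abs_duffingCubic_sub (hε : 0 ≤ ε) {σ σ' : ℝ} (hσ : 0 ≤ σ)
    (hσ' : 0 ≤ σ') : 966 * |σ - σ'| ≤ |duffingCubic ε σ - duffingCubic ε σ'| :=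
  (mul_le_mul_of_nonneg_right (by linarith) (abs_nonneg _)).trans
    (mul_abs_sub_le_abs_cubic_sub (by positivity) (by positivity) (by positivity) hσ hσ')

theorem duffingCubic_injOn (hε : 0 ≤ ε) : Set.InjOn (duffingCubic ε) (Set.Ici 0) := by
  intro σ hσ σ' hσ' h
  have := mul_abs_sub_le_abs_duffingCubic_sub hε hσ hσ'
  rw [h, sub_self, abs_zero] at this
  exact sub_eq_zero.1 (abs_eq_zero.1 (le_antisymm (by linarith) (abs_nonneg _)))

/-- Truncated series of `ω₂⁻²` in `ε = A²`. -/
noncomputable def invFreqSqSeries (ε : ℝ) : ℝ :=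
  1 - 3 / 4 * ε + 75 / 128 * ε ^ 2 - 975 / 2048 * ε ^ 3

/-- Truncated series of `ω₂⁻¹ = T₂ / (2π)` in `ε = A²`. -/
noncomputable def invFreqSeries (ε : ℝ) : ℝ :=
  1 - 3 / 8 * ε + 57 / 256 * ε ^ 2 - 633 / 4096 * ε ^ 3

theorem invFreqSqSeries_nonneg (hε₀ : 0 ≤ ε) (hε : ε ≤ 1 / 4) : 0 ≤ invFreqSqSeries ε := by
  unfold invFreqSqSeries
  nlinarith [pow_nonneg hε₀ 2, pow_le_pow_left₀ hε₀ hε 3]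

theorem half_le_invFreqSeries (hε : ε ≤ 1) : 1 / 2 ≤ invFreqSeries ε := by
  unfold invFreqSeries
  nlinarith [sq_nonneg ε]

theorem abs_duffingCubic_invFreqSqSeries_le (hε₀ : 0 ≤ ε) (hε : ε ≤ 1) :
    |duffingCubic ε (invFreqSqSeries ε)| ≤ 966 * ε ^ 4 := by
  have hresidual : duffingCubic ε (invFreqSqSeries ε) = ε ^ 4 * (236439 / 512
      - 612063 / 32768 * ε + 10134801 / 1048576 * ε ^ 2 - 43507125 / 16777216 * ε ^ 3
      - 4903644825 / 268435456 * ε ^ 4 - 31954685625 / 4294967296 * ε ^ 5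
      + 40946563125 / 8589934592 * ε ^ 6 - 13475109375 / 4294967296 * ε ^ 7
      + 1226234953125 / 549755813888 * ε ^ 8) := by
    unfold duffingCubic invFreqSqSeries
    ring
  have h0 (k : ℕ) := pow_nonneg hε₀ k
  have h1 (k : ℕ) := pow_le_one₀ hε₀ hε (n := k)
  rw [hresidual, abs_mul, abs_of_nonneg (h0 4), mul_comm]
  refine mul_le_mul_of_nonneg_right (abs_le.2 ⟨?_, ?_⟩) (h0 4) <;>
    linarith [h0 1, h0 2, h0 3, h0 4, h0 5, h0 6, h0 7, h0 8,
      h1 1, h1 2, h1 3, h1 4, h1 5, h1 6, h1 7, h1 8]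

theorem abs_sq_invFreqSeries_sub_le (hε₀ : 0 ≤ ε) (hε : ε ≤ 1) :
    |invFreqSeries ε ^ 2 - invFreqSqSeries ε| ≤ ε ^ 4 := by
  have hresidual : invFreqSeries ε ^ 2 - invFreqSqSeries ε =
      ε ^ 4 * (10845 / 65536 - 36081 / 524288 * ε + 400689 / 16777216 * ε ^ 2) := by
    unfold invFreqSeries invFreqSqSeries
    ring
  rw [hresidual, abs_mul, abs_of_nonneg (pow_nonneg hε₀ 4)]
  refine mul_le_of_le_one_right (pow_nonneg hε₀ 4) (abs_le.2 ⟨?_, ?_⟩) <;>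
    nlinarith [pow_nonneg hε₀ 2, pow_le_one₀ hε₀ hε (n := 2)]

theorem abs_inv_sub_invFreqSeries_le (hε₀ : 0 ≤ ε) (hε : ε ≤ 1 / 4) {ω : ℝ} (hω : 0 < ω)
    (hroot : duffingCubic ε (ω ^ 2)⁻¹ = 0) : |ω⁻¹ - invFreqSeries ε| ≤ 4 * ε ^ 4 := by
  have hσ : |(ω ^ 2)⁻¹ - invFreqSqSeries ε| ≤ ε ^ 4 := by
    have hslope := mul_abs_sub_le_abs_duffingCubic_sub hε₀ (σ := (ω ^ 2)⁻¹) (by positivity)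
      (invFreqSqSeries_nonneg hε₀ hε)
    rw [hroot, zero_sub, abs_neg] at hslope
    linarith [abs_duffingCubic_invFreqSqSeries_le hε₀ (by linarith)]
  calc |ω⁻¹ - invFreqSeries ε|
      ≤ 2 * |ω⁻¹ ^ 2 - invFreqSeries ε ^ 2| :=
        abs_sub_le_two_mul_abs_sq_sub (inv_nonneg.2 hω.le) (half_le_invFreqSeries (by linarith))
    _ ≤ 2 * (|(ω ^ 2)⁻¹ - invFreqSqSeries ε| + |invFreqSqSeries ε - invFreqSeries ε ^ 2|) := by
        rw [inv_pow]
        gcongr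
        exact abs_sub_le _ _ _
    _ ≤ 4 * ε ^ 4 := by
        rw [abs_sub_comm (invFreqSqSeries ε)]
        linarith [abs_sq_invFreqSeries_sub_le hε₀ (by linarith)]

end

/-- Second-order harmonic balance for the Duffing-harmonic oscillator: for each
`A ≥ 0` the sextic `p_A(ω)` has exactly one positive real root `ω₂(A)`, and
`T₂(A) = 2π/ω₂(A)` satisfies
`T₂(A) = 2π − (3/4)πA² + (57/128)πA⁴ − (633/2048)πA⁶ + O(A⁸)` at `A = 0⁺`. -/
theorem second_order_HBM_duffing (p : ℝ → ℝ → ℝ)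
    (hp : ∀ A ω : ℝ, p A ω = 1058 * ω ^ 6 - 3 * (219 * A ^ 2 + 322) * ω ^ 4
        - (9 / 4) * (21 * A ^ 4 + 80 * A ^ 2 + 40) * ω ^ 2
        - (27 / 64) * A ^ 2 * (7 * A ^ 2 + 8) ^ 2 - 2)
    (ω₂ : ℝ → ℝ)
    (hω₂ : ∀ A : ℝ, 0 ≤ A → 0 < ω₂ A ∧ p A (ω₂ A) = 0)
    (T₂ : ℝ → ℝ)
    (hT₂ : ∀ A : ℝ, T₂ A = 2 * π / ω₂ A) :
    (∀ A : ℝ, 0 ≤ A → ∃! ω : ℝ, 0 < ω ∧ p A ω = 0)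
    ∧ ∃ C > (0 : ℝ), ∃ δ > (0 : ℝ), ∀ A : ℝ, 0 < A → A < δ →
        |T₂ A - (2 * π - (3 / 4) * π * A ^ 2 + (57 / 128) * π * A ^ 4
            - (633 / 2048) * π * A ^ 6)| ≤ C * A ^ 8 := by
  have hcubic (A ω : ℝ) (hω : 0 < ω) (h : p A ω = 0) : duffingCubic (A ^ 2) (ω ^ 2)⁻¹ = 0 := by
    rw [hp, duffing_sextic_eq A hω.ne'] at h
    exact (mul_eq_zero.1 h).resolve_left (by positivity)
  refine ⟨fun A hA => ⟨ω₂ A, hω₂ A hA, fun ω hω => ?_⟩,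
    8 * π, by positivity, 1 / 2, by norm_num, fun A hA hAδ => ?_⟩
  · obtain ⟨hpos, hroot⟩ := hω₂ A hA
    have hσ := duffingCubic_injOn (sq_nonneg A) (inv_nonneg.2 (sq_nonneg ω))
      (inv_nonneg.2 (sq_nonneg (ω₂ A))) ((hcubic A ω hω.1 hω.2).trans (hcubic A _ hpos hroot).symm)
    exact (pow_left_inj₀ hω.1.le hpos.le two_ne_zero).1 (inv_inj.1 hσ)
  · obtain ⟨hpos, hroot⟩ := hω₂ A hA.le
    have hε : A ^ 2 ≤ 1 / 4 := by nlinarith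
    have hT : T₂ A - (2 * π - (3 / 4) * π * A ^ 2 + (57 / 128) * π * A ^ 4
        - (633 / 2048) * π * A ^ 6) = 2 * π * ((ω₂ A)⁻¹ - invFreqSeries (A ^ 2)) := by
      rw [hT₂, invFreqSeries]
      ring
    rw [hT, abs_mul, abs_of_pos (by positivity)]
    calc 2 * π * |(ω₂ A)⁻¹ - invFreqSeries (A ^ 2)| ≤ 2 * π * (4 * (A ^ 2) ^ 4) := by
          gcongr
          exact abs_inv_sub_invFreqSeries_le (sq_nonneg A) hε hpos (hcubic A _ hpos hroot)
      _ = 8 * π * A ^ 8 := by ring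
end

section
/- Let k ≥ 0 and F(x) = x²/2 + k x⁴/4 + x⁶/6. Then the period function T(A) = 2√2 ∫₀^A dx/√(F(A) − F(x)) of the system ẋ = −y, ẏ = x + kx³ + x⁵ is strictly decreasing on (0, ∞). -/
/-!
Substituting `x = s A` turns `T(A)` into `2√2 ∫₀¹ ds / √ψ_A(s)`, where
`F(A) - F(sA) = A² ψ_A(s)`. For `k ≥ 0` and `s ∈ [0, 1)` every coefficient of
`ψ_A(s) = (1 - s²)/2 + k A² (1 - s⁴)/4 + A⁴ (1 - s⁶)/6` is nonnegative and the last one grows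
strictly with `A`, so the integrand decreases strictly in `A`. The bound `ψ_A(s) ≥ (1 - s)/2`
makes the integrals converge at `s = 1`.
-/

open Real Set MeasureTheory

theorem intervalIntegrable_one_div_sqrt_of_le {φ : ℝ → ℝ} {c : ℝ} (hc : 0 < c)
    (hφ : Measurable φ) (hle : ∀ s ∈ Ioo (0 : ℝ) 1, c * (1 - s) ≤ φ s) :
    IntervalIntegrable (fun s => 1 / √(φ s)) volume 0 1 := by
  have hdom : IntervalIntegrable (fun s : ℝ => (√c)⁻¹ * (1 - s) ^ (-(1 / 2) : ℝ)) volume 0 1 := by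
    have h := (intervalIntegral.intervalIntegrable_rpow' (r := -(1 / 2)) (a := 0) (b := 1)
      (by norm_num)).comp_sub_left 1
    simp only [sub_zero, sub_self] at h
    exact h.symm.const_mul _
  refine hdom.mono_fun' (measurable_const.div hφ.sqrt).aestronglyMeasurable ?_
  rw [uIoc_of_le zero_le_one]
  refine ae_restrict_of_ae_eq_of_ae_restrict Ioo_ae_eq_Ioc ?_
  refine (ae_restrict_iff' measurableSet_Ioo).2 (Filter.Eventually.of_forall fun s hs => ?_)
  have hs1 : 0 < 1 - s := sub_pos.2 hs.2
  calc ‖1 / √(φ s)‖ = 1 / √(φ s) := Real.norm_of_nonneg (by positivity)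
    _ ≤ 1 / √(c * (1 - s)) :=
        one_div_le_one_div_of_le (by positivity) (Real.sqrt_le_sqrt (hle s hs))
    _ = (√c)⁻¹ * (1 - s) ^ (-(1 / 2) : ℝ) := by
        rw [Real.sqrt_mul hc.le, Real.rpow_neg hs1.le, ← Real.sqrt_eq_rpow, one_div, mul_inv]

theorem intervalIntegral_lt_of_lt_on_Ioo {f g : ℝ → ℝ} {a b : ℝ} (hab : a < b)
    (hf : IntervalIntegrable f volume a b) (hg : IntervalIntegrable g volume a b)
    (hlt : ∀ x ∈ Ioo a b, f x < g x) :
    ∫ x in a..b, f x < ∫ x in a..b, g x := by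
  rw [← sub_pos, ← intervalIntegral.integral_sub hg hf]
  exact intervalIntegral.intervalIntegral_pos_of_pos_on (hg.sub hf)
    (fun x hx => sub_pos.2 (hlt x hx)) hab

theorem integral_one_div_sqrt_sub_eq_of_scaling {F G : ℝ → ℝ} {A : ℝ} (hA : 0 < A)
    (hscale : ∀ s, F A - F (s * A) = A ^ 2 * G s) :
    ∫ x in (0 : ℝ)..A, 1 / √(F A - F x) = ∫ s in (0 : ℝ)..1, 1 / √(G s) := by
  have hsub := intervalIntegral.integral_comp_mul_right (a := 0) (b := 1)
    (fun x => 1 / √(F A - F x)) hA.ne'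
  simp only [zero_mul, one_mul, smul_eq_mul] at hsub
  have hintegrand : ∀ s, 1 / √(F A - F (s * A)) = A⁻¹ * (1 / √(G s)) := fun s => by
    rw [hscale, Real.sqrt_mul (sq_nonneg A), Real.sqrt_sq hA.le, one_div, mul_inv, one_div]
  simp only [hintegrand, intervalIntegral.integral_const_mul] at hsub
  rw [(mul_right_injective₀ (inv_ne_zero hA.ne')).eq_iff.1 hsub]

noncomputable def quinticScaledGap (k A s : ℝ) : ℝ :=
  (1 - s ^ 2) / 2 + k * A ^ 2 * (1 - s ^ 4) / 4 + A ^ 4 * (1 - s ^ 6) / 6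

theorem sub_eq_sq_mul_quinticScaledGap {F : ℝ → ℝ} {k : ℝ}
    (hF : ∀ x : ℝ, F x = x ^ 2 / 2 + k * x ^ 4 / 4 + x ^ 6 / 6) (A s : ℝ) :
    F A - F (s * A) = A ^ 2 * quinticScaledGap k A s := by
  rw [hF, hF, quinticScaledGap]
  ring

theorem half_one_sub_le_quinticScaledGap {k A s : ℝ} (hk : 0 ≤ k) (hs0 : 0 ≤ s) (hs1 : s ≤ 1) :
    1 / 2 * (1 - s) ≤ quinticScaledGap k A s := by
  have h4 : 0 ≤ k * A ^ 2 * (1 - s ^ 4) :=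
    mul_nonneg (by positivity) (sub_nonneg.2 (pow_le_one₀ hs0 hs1))
  have h6 : 0 ≤ A ^ 4 * (1 - s ^ 6) :=
    mul_nonneg (by positivity) (sub_nonneg.2 (pow_le_one₀ hs0 hs1))
  unfold quinticScaledGap
  nlinarith

theorem quinticScaledGap_lt_of_lt {k A B s : ℝ} (hk : 0 ≤ k) (hA : 0 ≤ A) (hAB : A < B)
    (hs0 : 0 ≤ s) (hs1 : s < 1) :
    quinticScaledGap k A s < quinticScaledGap k B s := by
  have h4 : k * A ^ 2 * (1 - s ^ 4) ≤ k * B ^ 2 * (1 - s ^ 4) := by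
    gcongr
    exact sub_nonneg.2 (pow_le_one₀ hs0 hs1.le)
  have h6 : A ^ 4 * (1 - s ^ 6) < B ^ 4 * (1 - s ^ 6) := by
    gcongr
    exact sub_pos.2 (pow_lt_one₀ hs0 hs1 (by norm_num))
  unfold quinticScaledGap
  linarith

/-- For `k ≥ 0` and the potential `F(x) = x²/2 + kx⁴/4 + x⁶/6`, the period function
`T(A) = 2√2 ∫₀^A dx/√(F(A) − F(x))` of `ẋ = −y, ẏ = x + kx³ + x⁵` is strictly
decreasing on `(0, ∞)`. -/
theorem quintic_period_strictAnti (k : ℝ) (hk : 0 ≤ k)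
    (F T : ℝ → ℝ)
    (hF : ∀ x : ℝ, F x = x ^ 2 / 2 + k * x ^ 4 / 4 + x ^ 6 / 6)
    (hT : ∀ A : ℝ, T A = 2 * Real.sqrt 2 * ∫ x in (0:ℝ)..A, 1 / Real.sqrt (F A - F x)) :
    StrictAntiOn T (Set.Ioi (0 : ℝ)) := by
  have hscaled : ∀ A > 0, T A = 2 * √2 * ∫ s in (0 : ℝ)..1, 1 / √(quinticScaledGap k A s) :=
    fun A hA => by
      rw [hT, integral_one_div_sqrt_sub_eq_of_scaling hA (sub_eq_sq_mul_quinticScaledGap hF A)]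
  have hintegrable : ∀ A, IntervalIntegrable (fun s => 1 / √(quinticScaledGap k A s)) volume 0 1 :=
    fun A => intervalIntegrable_one_div_sqrt_of_le (by norm_num)
      (by unfold quinticScaledGap; fun_prop)
      fun s hs => half_one_sub_le_quinticScaledGap hk hs.1.le hs.2.le
  intro A (hA : 0 < A) B (hB : 0 < B) hAB
  rw [hscaled A hA, hscaled B hB]
  refine mul_lt_mul_of_pos_left (intervalIntegral_lt_of_lt_on_Ioo one_pos
    (hintegrable B) (hintegrable A) fun s hs => ?_) (by positivity)
  have hgap_pos : 0 < quinticScaledGap k A s :=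
    (mul_pos one_half_pos (sub_pos.2 hs.2)).trans_le
      (half_one_sub_le_quinticScaledGap hk hs.1.le hs.2.le)
  exact one_div_lt_one_div_of_lt (Real.sqrt_pos.2 hgap_pos)
    (Real.sqrt_lt_sqrt hgap_pos.le (quinticScaledGap_lt_of_lt hk hA.le hAB hs.1.le hs.2))
end
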